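/- Let f̃ : ℝ^{n×n} → ℝ be differentiable and define f : ℝ^{n×r} × ℝ^{n×r} → ℝ by f(X,Y) = (f̃(X Yᵀ) + f̃(Y Xᵀ))/2, and for γ ∈ ℝ define F(X,Y) = f(X,Y) + (γ/2)‖X−Y‖_F². Suppose (X̄,Ȳ) is a stationary point of F (both partial Fréchet derivatives of F vanish at (X̄,Ȳ)) and X̄ = Ȳ. Then X̄ is a stationary point of the factorized problem (2), i.e., the Fréchet derivative of the map G : ℝ^{n×r} → ℝ, G(X) = f̃(X Xᵀ), vanishes at X̄. -/

import Mathlib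

open Matrix

attribute [local instance] Matrix.frobeniusNormedAddCommGroup Matrix.frobeniusNormedSpace

/-! At a diagonal point the penalty `(γ/2)‖X - X̄‖²` is flat, and splitting the two arguments of
the bilinear map `(X, Y) ↦ X Yᵀ` in `f̃(X Xᵀ)` by the product rule shows that the partial derivative
of `X ↦ f̃(X X̄ᵀ) + f̃(X̄ Xᵀ)` at `X̄` is the full derivative of `X ↦ f̃(X Xᵀ)`. Hence the
`X`-partial derivative of `F` at `(X̄, X̄)` is half the derivative of the factorized objective. -/

theorem hasFDerivAt_comp_bilinear_add_comp_bilinear_flip {𝕜 E F G : Type*}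
    [NontriviallyNormedField 𝕜] [NormedAddCommGroup E] [NormedSpace 𝕜 E] [NormedAddCommGroup F]
    [NormedSpace 𝕜 F] [NormedAddCommGroup G] [NormedSpace 𝕜 G] (B : E →L[𝕜] E →L[𝕜] F) {g : F → G}
    {a : E} (hg : DifferentiableAt 𝕜 g (B a a)) :
    HasFDerivAt (fun x => g (B x a) + g (B a x)) (fderiv 𝕜 (fun x => g (B x x)) a) a := by
  have hdiag : HasFDerivAt (fun x => g (B x x))
      ((fderiv 𝕜 g (B a a)).comp (B.precompR E a (.id 𝕜 E) + B.precompL E (.id 𝕜 E) a)) a :=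
    hg.hasFDerivAt.comp (g := g) (f := fun x => B x x) a
      (B.hasFDerivAt_of_bilinear (f := fun x => x) (g := fun x => x) (hasFDerivAt_id a)
        (hasFDerivAt_id a))
  have hsplit := (hg.hasFDerivAt.comp (g := g) (f := fun x => B x a) a (B.flip a).hasFDerivAt).add
    (hg.hasFDerivAt.comp (g := g) (f := fun x => B a x) a (B a).hasFDerivAt)
  rw [hdiag.fderiv]
  convert hsplit using 1 <;> ext h <;> simp [add_comm]

theorem hasFDerivAt_mul_norm_sub_sq_self {E : Type*} [NormedAddCommGroup E] [NormedSpace ℝ E]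
    (c : ℝ) (a : E) :
    HasFDerivAt (fun x => c * ‖x - a‖ ^ 2) (0 : E →L[ℝ] ℝ) a := by
  rw [hasFDerivAt_iff_isLittleO_nhds_zero]
  simpa using ((Asymptotics.isLittleO_norm_pow_id one_lt_two).const_mul_left c :
    (fun h : E => c * ‖h‖ ^ 2) =o[nhds 0] fun h => h)

noncomputable def mulTransposeCLM (m k : Type*) [Fintype m] [Fintype k] :
    Matrix m k ℝ →L[ℝ] Matrix m k ℝ →L[ℝ] Matrix m m ℝ :=
  LinearMap.toContinuousLinearMap <| LinearMap.toContinuousLinearMap.toLinearMap ∘ₗ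
    (mulLinearMap ℝ).compl₂ (transposeLinearEquiv m k ℝ ℝ).toLinearMap

theorem stationary_point_of_factorized_problem_general
    (n r : ℕ) (γ : ℝ)
    (ftil : Matrix (Fin n) (Fin n) ℝ → ℝ)
    (hdiff : Differentiable ℝ ftil)
    (f F : Matrix (Fin n) (Fin r) ℝ → Matrix (Fin n) (Fin r) ℝ → ℝ)
    (hf : ∀ X Y, f X Y = (ftil (X * Yᵀ) + ftil (Y * Xᵀ)) / 2)
    (hF : ∀ X Y, F X Y = f X Y + γ / 2 * ‖X - Y‖ ^ 2)
    (Xb Yb : Matrix (Fin n) (Fin r) ℝ)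
    (hstatX : fderiv ℝ (fun X => F X Yb) Xb = 0)
    (hXY : Xb = Yb) :
    fderiv ℝ (fun X : Matrix (Fin n) (Fin r) ℝ => ftil (X * Xᵀ)) Xb = 0 := by
  subst hXY
  set G' := fderiv ℝ (fun X : Matrix (Fin n) (Fin r) ℝ => ftil (X * Xᵀ)) Xb
  have hsplit : HasFDerivAt (fun X => ftil (X * Xbᵀ) + ftil (Xb * Xᵀ)) G' Xb :=
    hasFDerivAt_comp_bilinear_add_comp_bilinear_flip (mulTransposeCLM (Fin n) (Fin r))
      (a := Xb) (hdiff _)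
  have hpartial : HasFDerivAt (fun X => F X Xb) ((2⁻¹ : ℝ) • G' + 0) Xb := by
    have hFX : (fun X => F X Xb) =
        fun X => 2⁻¹ * (ftil (X * Xbᵀ) + ftil (Xb * Xᵀ)) + γ / 2 * ‖X - Xb‖ ^ 2 := by
      funext X
      rw [hF, hf, div_eq_inv_mul]
    rw [hFX]
    exact (hsplit.const_mul 2⁻¹).add (hasFDerivAt_mul_norm_sub_sq_self (γ / 2) Xb)
  have hhalf : (2⁻¹ : ℝ) • G' + 0 = 0 := hpartial.fderiv.symm.trans hstatX
  simpa using hhalf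

/-- Corollary 1 (i): If `(X̄,Ȳ)` is a stationary point of the
Courant-penalized surrogate `F(X,Y) = (f̃(XYᵀ)+f̃(YXᵀ))/2 + (γ/2)‖X−Y‖_F²`
with `X̄ = Ȳ`, then `X̄` is a stationary point of `X ↦ f̃(XXᵀ)`. -/
theorem stationary_point_of_factorized_problem
    (n r : ℕ) (γ : ℝ)
    (ftil : Matrix (Fin n) (Fin n) ℝ → ℝ)
    (hdiff : Differentiable ℝ ftil)
    (f F : Matrix (Fin n) (Fin r) ℝ → Matrix (Fin n) (Fin r) ℝ → ℝ)
    (hf : ∀ X Y, f X Y = (ftil (X * Yᵀ) + ftil (Y * Xᵀ)) / 2)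
    (hF : ∀ X Y, F X Y = f X Y + γ / 2 * ‖X - Y‖ ^ 2)
    (Xb Yb : Matrix (Fin n) (Fin r) ℝ)
    (hstatX : fderiv ℝ (fun X => F X Yb) Xb = 0)
    (hstatY : fderiv ℝ (fun Y => F Xb Y) Yb = 0)
    (hXY : Xb = Yb) :
    fderiv ℝ (fun X : Matrix (Fin n) (Fin r) ℝ => ftil (X * Xᵀ)) Xb = 0 :=
  stationary_point_of_factorized_problem_general n r γ ftil hdiff f F hf hF Xb Yb hstatX hXY
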